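/- Let G = (N, T, P, S) be an FGG in which Ω(ℓ) is a finite set for every node label ℓ. For a nonterminal X with type(X) = ℓ₁⋯ℓ_k, let Ξ_X = Ω(ℓ₁) × ⋯ × Ω(ℓ_k). Consider the system of equations in unknowns ψ_X(ξ) (for X ∈ N, ξ ∈ Ξ_X) with values in [0, ∞]: ψ_X(ξ) = Σ_{(X → R) ∈ P} Σ_{ξ' assignment of R with ξ'(ext_R) = ξ} ( Π_{terminal edges e of R} F(lab^E(e))(ξ'(att(e))) · Π_{nonterminal edges e of R} ψ_{lab^E(e)}(ξ'(att(e))) ). The right-hand side defines a monotone operator on [0, ∞]-valued families and hence has a least fixed point ψ*. Then the sum-product of G equals the value of this least solution at the start symbol: Z_G = ψ*_S(()) (the value at the empty assignment, since type(S) = ε). -/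

import Mathlib

open scoped ENNReal Classical

structure Fragment (LV LE : Type) (htype : LE → List LV) where
  V : Finset ℕ
  E : Finset ℕ
  att : ℕ → List ℕ
  labV : ℕ → LV
  labE : ℕ → LE
  ext : List ℕ
  att_mem : ∀ e ∈ E, ∀ v ∈ att e, v ∈ V
  wt : ∀ e ∈ E, (att e).map labV = htype (labE e)
  ext_mem : ∀ v ∈ ext, v ∈ V

structure HRG (LV LE : Type) (htype : LE → List LV) where
  N : Set LE
  T : Set LE
  finN : N.Finite
  finT : T.Finite
  disj : Disjoint N T
  P : Type
  finP : Finite P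
  lhs : P → LE
  lhs_mem : ∀ π, lhs π ∈ N
  rhs : P → Fragment LV LE htype
  rhs_lab : ∀ π, ∀ e ∈ (rhs π).E, (rhs π).labE e ∈ N ∪ T
  rhs_ext : ∀ π, ((rhs π).ext).map (rhs π).labV = htype (lhs π)
  S : LE
  S_mem : S ∈ N
  S_type : htype S = []

variable {LV LE : Type} {htype : LE → List LV}

inductive Deriv (G : HRG LV LE htype) : LE → Type
  | node (π : G.P)
      (children : ∀ e, e ∈ (G.rhs π).E → (G.rhs π).labE e ∈ G.N →
        Deriv G ((G.rhs π).labE e)) :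
      Deriv G (G.lhs π)

structure AHyper (LV LE : Type) (htype : LE → List LV) where
  V : Type
  E : Type
  finV : Finite V
  finE : Finite E
  att : E → List V
  labV : V → LV
  labE : E → LE
  wt : ∀ e, (att e).map labV = htype (labE e)
  ext : List V

/-- Mapping a function over a `pmap` is an ordinary `map` when the result is
proof-irrelevant. -/
theorem List.map_pmap_eq_map {α β γ : Type*} {p : α → Prop} (l : List α)
    (H : ∀ a ∈ l, p a) (f : ∀ a, p a → β) (g : β → γ) (g' : α → γ)
    (hfg : ∀ a ha, g (f a ha) = g' a) : (l.pmap f H).map g = l.map g' := by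
  induction l with
  | nil => simp
  | cons a l ih =>
      simp only [List.pmap, List.map_cons, hfg]
      exact congrArg _ (ih (fun x hx => H x (List.mem_cons_of_mem _ hx)))

namespace Fragment

variable (R : Fragment LV LE htype) (NT : Set LE)
  (child : ∀ e, e ∈ R.E → R.labE e ∈ NT → AHyper LV LE htype)
  (hchild : ∀ e he hn, ((child e he hn).ext).map (child e he hn).labV = htype (R.labE e))

/-- Replacement of the `NT`-labeled edges of `R` by the given hypergraphs,
identifying the `i`-th endpoint of each replaced edge with the `i`-th external
node of the corresponding replacement graph. -/
noncomputable def replace : AHyper LV LE htype :=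
  letI C : ∀ _p : {e : ℕ // e ∈ R.E ∧ R.labE e ∈ NT}, AHyper LV LE htype :=
    fun p => child p.1 p.2.1 p.2.2
  letI V0 : Type := {v : ℕ // v ∈ R.V} ⊕ Σ p : {e : ℕ // e ∈ R.E ∧ R.labE e ∈ NT}, (C p).V
  letI rel : V0 → V0 → Prop := fun a b =>
    ∃ (p : {e : ℕ // e ∈ R.E ∧ R.labE e ∈ NT}) (i : ℕ)
      (hi : i < (R.att p.1).length) (hv : (R.att p.1).get ⟨i, hi⟩ ∈ R.V)
      (hj : i < (C p).ext.length),
      a = Sum.inl ⟨(R.att p.1).get ⟨i, hi⟩, hv⟩ ∧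
      b = Sum.inr ⟨p, (C p).ext.get ⟨i, hj⟩⟩
  { V := Quot rel
    E := {e : ℕ // e ∈ R.E ∧ R.labE e ∉ NT} ⊕
      Σ p : {e : ℕ // e ∈ R.E ∧ R.labE e ∈ NT}, (C p).E
    finV := by
      haveI : ∀ p : {e : ℕ // e ∈ R.E ∧ R.labE e ∈ NT}, Finite (C p).V :=
        fun p => (C p).finV
      haveI : Finite {e : ℕ // e ∈ R.E ∧ R.labE e ∈ NT} :=
        (R.E.finite_toSet.subset (fun e he => he.1)).to_subtype
      haveI : Finite V0 := by infer_instance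
      exact Finite.of_surjective (Quot.mk rel) (fun q => Quot.exists_rep q)
    finE := by
      haveI : ∀ p : {e : ℕ // e ∈ R.E ∧ R.labE e ∈ NT}, Finite (C p).E :=
        fun p => (C p).finE
      haveI : Finite {e : ℕ // e ∈ R.E ∧ R.labE e ∈ NT} :=
        (R.E.finite_toSet.subset (fun e he => he.1)).to_subtype
      haveI : Finite {e : ℕ // e ∈ R.E ∧ R.labE e ∉ NT} :=
        (R.E.finite_toSet.subset (fun e he => he.1)).to_subtype
      infer_instance
    att := fun e => match e with
      | Sum.inl q => (R.att q.1).pmap (fun v h => Quot.mk rel (Sum.inl ⟨v, h⟩))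
          (R.att_mem q.1 q.2.1)
      | Sum.inr q => ((C q.1).att q.2).map (fun v => Quot.mk rel (Sum.inr ⟨q.1, v⟩))
    labV := Quot.lift (Sum.elim (fun v => R.labV v.1) (fun q => (C q.1).labV q.2)) (by
      rintro a b ⟨p, i, hi, hv, hj, rfl, rfl⟩
      simp only [Sum.elim_inl, Sum.elim_inr, List.get_eq_getElem]
      have h1 : ((R.att p.1).map R.labV)[i]? = (htype (R.labE p.1))[i]? := by
        rw [R.wt p.1 p.2.1]
      have h2 : ((C p).ext.map (C p).labV)[i]? = (htype (R.labE p.1))[i]? := by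
        rw [hchild p.1 p.2.1 p.2.2]
      rw [List.getElem?_map, List.getElem?_eq_getElem hi] at h1
      rw [List.getElem?_map, List.getElem?_eq_getElem hj] at h2
      exact Option.some.inj (h1.trans h2.symm))
    labE := fun e => match e with
      | Sum.inl q => R.labE q.1
      | Sum.inr q => (C q.1).labE q.2
    wt := by
      rintro (q | q)
      · dsimp only
        rw [← R.wt q.1 q.2.1]
        exact List.map_pmap_eq_map _ _ _ _ _ (fun a ha => rfl)
      · dsimp only
        simp only [List.map_map]
        exact (C q.1).wt q.2
    ext := R.ext.pmap (fun v h => Quot.mk rel (Sum.inl ⟨v, h⟩)) R.ext_mem }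

theorem replace_ext_map :
    ((R.replace NT child hchild).ext).map (R.replace NT child hchild).labV =
      R.ext.map R.labV := by
  simp only [replace]
  exact List.map_pmap_eq_map _ _ _ _ _ (fun a ha => rfl)

end Fragment

/-- The derived graph of a derivation tree, together with the fact that the
labels of its external nodes agree with the type of the derived nonterminal. -/
noncomputable def HRG.deriveA (G : HRG LV LE htype) :
    ∀ {X : LE}, Deriv G X → {H : AHyper LV LE htype // H.ext.map H.labV = htype X}
  | _, .node π c =>
      ⟨Fragment.replace (G.rhs π) G.N (fun e he hn => (G.deriveA (c e he hn)).1)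
          (fun e he hn => (G.deriveA (c e he hn)).2),
        by rw [Fragment.replace_ext_map]; exact G.rhs_ext π⟩

/-- The derived graph of a derivation tree. -/
noncomputable def HRG.derive (G : HRG LV LE htype) {X : LE} (D : Deriv G X) :
    AHyper LV LE htype :=
  (G.deriveA D).1

/-- A factor graph grammar: an HRG together with domains for the node labels
and factor functions for the (terminal) edge labels. -/
structure FGG (LV LE : Type) (htype : LE → List LV) (W : Type)
    extends HRG LV LE htype where
  Ω : LV → Set W
  F : LE → List W → NNReal

variable {W : Type}

/-- Assignments of a hypergraph: maps from nodes to values in the domains. -/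
def AHyper.Assign (Ω : LV → Set W) (H : AHyper LV LE htype) : Type :=
  {ξ : H.V → W // ∀ v, ξ v ∈ Ω (H.labV v)}

/-- The weight of an assignment: the product, over all terminal-labeled
hyperedges, of the factor function applied to the values at the endpoints. -/
noncomputable def AHyper.weight (Tset : Set LE) (F : LE → List W → NNReal)
    (H : AHyper LV LE htype) (ξ : H.V → W) : ℝ≥0∞ :=
  ∏ᶠ e : {e : H.E // H.labE e ∈ Tset},
    (F (H.labE e.1) ((H.att e.1).map ξ) : ℝ≥0∞)

/-- The sum–product of a factor graph grammar. -/
noncomputable def FGG.Z (G : FGG LV LE htype W) : ℝ≥0∞ :=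
  ∑' D : Deriv G.toHRG G.S,
    ∑' ξ : (G.toHRG.derive D).Assign G.Ω,
      (G.toHRG.derive D).weight G.T G.F ξ.1

/-- Assignments of the nodes of a fragment. -/
def Fragment.Assign (Ω : LV → Set W) (R : Fragment LV LE htype) : Type :=
  {ξ : {v : ℕ // v ∈ R.V} → W // ∀ v, ξ v ∈ Ω (R.labV v.1)}

/-- The values of an assignment at the external nodes of a fragment. -/
def Fragment.extVals (R : Fragment LV LE htype) (ξ : {v : ℕ // v ∈ R.V} → W) :
    List W :=
  R.ext.pmap (fun v h => ξ ⟨v, h⟩) R.ext_mem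

/-- The values of an assignment at the endpoints of an edge of a fragment. -/
def Fragment.attVals (R : Fragment LV LE htype) (ξ : {v : ℕ // v ∈ R.V} → W)
    (e : ℕ) (he : e ∈ R.E) : List W :=
  (R.att e).pmap (fun v h => ξ ⟨v, h⟩) (R.att_mem e he)

/-- The monotone operator, on `[0,∞]`-valued families `ψ_X(ξ)` indexed by
edge labels `X` and assignments `ξ` to the endpoints of `X`, whose defining
equations are
`ψ_X(ξ) = Σ_{(X→R) ∈ P} Σ_{ξ' : assignment of R with ξ'(ext_R) = ξ}
  (Π_{terminal e ∈ R} F(lab(e))(ξ'(att e))) · (Π_{nonterminal e ∈ R} ψ_{lab(e)}(ξ'(att e)))`. -/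
noncomputable def FGG.sysOp (G : FGG LV LE htype W) :
    (LE → List W → ℝ≥0∞) → (LE → List W → ℝ≥0∞) := fun ψ X ξ =>
  ∑' π : {π : G.P // G.lhs π = X},
    ∑' ξ' : {ξ' : (G.rhs π.1).Assign G.Ω // (G.rhs π.1).extVals ξ'.1 = ξ},
      (∏ᶠ e : {e : ℕ // e ∈ (G.rhs π.1).E ∧ (G.rhs π.1).labE e ∈ G.T},
          (G.F ((G.rhs π.1).labE e.1)
            ((G.rhs π.1).attVals ξ'.1.1 e.1 e.2.1) : ℝ≥0∞)) *
      (∏ᶠ e : {e : ℕ // e ∈ (G.rhs π.1).E ∧ (G.rhs π.1).labE e ∈ G.N},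
          ψ ((G.rhs π.1).labE e.1) ((G.rhs π.1).attVals ξ'.1.1 e.1 e.2.1))


theorem finprod_le_finprod_enn {ι : Type*} [Finite ι] (f g : ι → ℝ≥0∞) (h : ∀ i, f i ≤ g i) :
    ∏ᶠ i, f i ≤ ∏ᶠ i, g i := by
  haveI := Fintype.ofFinite ι
  rw [finprod_eq_prod_of_fintype, finprod_eq_prod_of_fintype]
  exact Finset.prod_le_prod' fun i _ => h i

theorem tsum_pi_enn_aux : ∀ (n : ℕ) {ι : Type} [Fintype ι] {β : ι → Type}
    (f : ∀ i, β i → ℝ≥0∞), Fintype.card ι = n →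
    ∑' g : ∀ i, β i, ∏ i, f i (g i) = ∏ i, ∑' x, f i x := by
  intro n
  induction n with
  | zero =>
    intro ι _ β f hc
    haveI : IsEmpty ι := Fintype.card_eq_zero_iff.mp hc
    haveI : Unique (∀ i, β i) := ⟨⟨fun i => (IsEmpty.false i).elim⟩, fun _ => funext fun i => (IsEmpty.false i).elim⟩
    rw [tsum_eq_single (default : ∀ i, β i) (fun b hb => (hb (Subsingleton.elim b _)).elim)]
    simp
  | succ n ih =>
    intro ι _ β f hc
    obtain ⟨a⟩ : Nonempty ι := Fintype.card_pos_iff.mp (by omega)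
    classical
    have hcard : Fintype.card {j : ι // j ≠ a} = n := by
      have := Fintype.card_subtype_compl (p := fun j : ι => j = a)
      simp only [Fintype.card_subtype_eq] at this
      simp only [ne_eq]
      omega
    have hsplit : ∀ (h : ι → ℝ≥0∞), ∏ i, h i = h a * ∏ j : {j : ι // j ≠ a}, h j.1 := by
      intro h
      rw [← Finset.mul_prod_erase Finset.univ h (Finset.mem_univ a)]
      congr 1
      rw [← Finset.prod_subtype (Finset.univ.erase a) (fun x => by simp) (fun x => h x)]
    calc ∑' g : ∀ i, β i, ∏ i, f i (g i)
        = ∑' p : β a × (∀ j : {j : ι // j ≠ a}, β j.1),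
            ∏ i, f i ((Equiv.piSplitAt a β).symm p i) :=
          ((Equiv.piSplitAt a β).symm.tsum_eq _).symm
      _ = ∑' p : β a × (∀ j : {j : ι // j ≠ a}, β j.1),
            f a p.1 * ∏ j : {j : ι // j ≠ a}, f j.1 (p.2 j) := by
          refine tsum_congr fun p => ?_
          rw [hsplit]
          congr 1
          · simp [Equiv.piSplitAt]
          · refine Finset.prod_congr rfl fun j _ => ?_
            congr 1
            simp [Equiv.piSplitAt, dif_neg j.2]
      _ = (∑' x : β a, f a x) * ∑' q : (∀ j : {j : ι // j ≠ a}, β j.1),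
            ∏ j : {j : ι // j ≠ a}, f j.1 (q j) := by
          rw [ENNReal.tsum_prod']
          have : ∀ x : β a, ∑' q : (∀ j : {j : ι // j ≠ a}, β j.1),
              f a x * ∏ j : {j : ι // j ≠ a}, f j.1 (q j)
              = f a x * ∑' q : (∀ j : {j : ι // j ≠ a}, β j.1),
                ∏ j : {j : ι // j ≠ a}, f j.1 (q j) := fun x => ENNReal.tsum_mul_left
          simp only [this]
          rw [ENNReal.tsum_mul_right]
      _ = (∑' x : β a, f a x) * ∏ j : {j : ι // j ≠ a}, ∑' x : β j.1, f j.1 x := by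
          rw [ih (fun j : {j : ι // j ≠ a} => f j.1) hcard]
      _ = ∏ i, ∑' x : β i, f i x := (hsplit (fun i => ∑' x : β i, f i x)).symm

theorem tsum_pi_enn {ι : Type} [Finite ι] {β : ι → Type} (f : ∀ i, β i → ℝ≥0∞) :
    ∑' g : ∀ i, β i, ∏ᶠ i, f i (g i) = ∏ᶠ i, ∑' x, f i x := by
  haveI := Fintype.ofFinite ι
  simp only [finprod_eq_prod_of_fintype]
  exact tsum_pi_enn_aux (Fintype.card ι) f rfl
section FinprodHelpers

theorem finprod_sum_split {A B : Type} [Finite A] [Finite B] (f : A ⊕ B → ℝ≥0∞) :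
    ∏ᶠ x, f x = (∏ᶠ a, f (Sum.inl a)) * ∏ᶠ b, f (Sum.inr b) := by
  haveI := Fintype.ofFinite A
  haveI := Fintype.ofFinite B
  simp only [finprod_eq_prod_of_fintype]
  exact Fintype.prod_sum_type f

theorem finprod_sigma_split {A : Type} [Finite A] {B : A → Type} [∀ a, Finite (B a)]
    (f : (Σ a, B a) → ℝ≥0∞) :
    ∏ᶠ x, f x = ∏ᶠ a, ∏ᶠ b, f ⟨a, b⟩ := by
  haveI := Fintype.ofFinite A
  haveI : ∀ a, Fintype (B a) := fun a => Fintype.ofFinite (B a)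
  simp only [finprod_eq_prod_of_fintype]
  rw [← Finset.univ_sigma_univ, Finset.prod_sigma]

theorem finprod_equiv_comp {A B : Type} [Finite B] (e : A ≃ B) (f : B → ℝ≥0∞) :
    ∏ᶠ a, f (e a) = ∏ᶠ b, f b := by
  haveI := Fintype.ofFinite B
  haveI := Fintype.ofEquiv B e.symm
  simp only [finprod_eq_prod_of_fintype]
  exact Equiv.prod_comp e f

/-- A subtype of a sigma type where the predicate depends on both components. -/
def sigmaSubtypeEquiv' {A : Type} {B : A → Type} (Q : ∀ a, B a → Prop) :
    {y : Σ a, B a // Q y.1 y.2} ≃ Σ a, {b : B a // Q a b} where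
  toFun y := ⟨y.1.1, y.1.2, y.2⟩
  invFun x := ⟨⟨x.1, x.2.1⟩, x.2.2⟩
  left_inv := fun ⟨⟨a, b⟩, h⟩ => rfl
  right_inv := fun ⟨a, b, h⟩ => rfl

end FinprodHelpers

section ReplaceEquiv

variable {LV LE W : Type} {htype : LE → List LV}
variable (R : Fragment LV LE htype) (NT : Set LE)
  (child : ∀ e, e ∈ R.E → R.labE e ∈ NT → AHyper LV LE htype)
  (hchild : ∀ e he hn, ((child e he hn).ext).map (child e he hn).labV = htype (R.labE e))

def repRel : ({v : ℕ // v ∈ R.V} ⊕ Σ p : {e : ℕ // e ∈ R.E ∧ R.labE e ∈ NT}, (child p.1 p.2.1 p.2.2).V) →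
    ({v : ℕ // v ∈ R.V} ⊕ Σ p : {e : ℕ // e ∈ R.E ∧ R.labE e ∈ NT}, (child p.1 p.2.1 p.2.2).V) → Prop :=
  fun a b =>
    ∃ (p : {e : ℕ // e ∈ R.E ∧ R.labE e ∈ NT}) (i : ℕ)
      (hi : i < (R.att p.1).length) (hv : (R.att p.1).get ⟨i, hi⟩ ∈ R.V)
      (hj : i < (child p.1 p.2.1 p.2.2).ext.length),
      a = Sum.inl ⟨(R.att p.1).get ⟨i, hi⟩, hv⟩ ∧
      b = Sum.inr ⟨p, (child p.1 p.2.1 p.2.2).ext.get ⟨i, hj⟩⟩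

theorem repV_eq : (R.replace NT child hchild).V = Quot (repRel R NT child) := rfl

theorem len_att (p : {e : ℕ // e ∈ R.E ∧ R.labE e ∈ NT}) :
    (R.att p.1).length = (htype (R.labE p.1)).length := by
  have := congrArg List.length (R.wt p.1 p.2.1)
  simpa using this

theorem len_ext
    (hch : ∀ e he hn, ((child e he hn).ext).map (child e he hn).labV = htype (R.labE e))
    (p : {e : ℕ // e ∈ R.E ∧ R.labE e ∈ NT}) :
    (child p.1 p.2.1 p.2.2).ext.length = (htype (R.labE p.1)).length := by
  have := congrArg List.length (hch p.1 p.2.1 p.2.2)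
  simpa using this

theorem repV_ind {motive : (R.replace NT child hchild).V → Prop}
    (h : ∀ a, motive (Quot.mk (repRel R NT child) a)) : ∀ v, motive v :=
  fun v => Quot.ind h v

noncomputable def assignEquiv (Ω : LV → Set W) (ξv : List W) :
    {q : (R.Assign Ω) × (∀ p : {e : ℕ // e ∈ R.E ∧ R.labE e ∈ NT},
          AHyper.Assign Ω (child p.1 p.2.1 p.2.2)) //
      (∀ p : {e : ℕ // e ∈ R.E ∧ R.labE e ∈ NT},
          ((child p.1 p.2.1 p.2.2).ext).map ((q.2 p).1) = R.attVals (q.1).1 p.1 p.2.1)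
        ∧ R.extVals (q.1).1 = ξv} ≃
    {ξ' : (R.replace NT child hchild).Assign Ω //
      ((R.replace NT child hchild).ext).map ξ'.1 = ξv} where
  toFun q :=
    ⟨⟨Quot.lift (Sum.elim (q.1.1).1 (fun s => ((q.1.2 s.1).1 s.2))) (by
        rintro a b ⟨p, i, hi, hv, hj, rfl, rfl⟩
        have hlist := q.2.1 p
        have h1 := List.getElem_of_eq hlist (i := i) (by simpa using hj)
        rw [List.getElem_map] at h1
        unfold Fragment.attVals at h1
        rw [List.getElem_pmap] at h1
        simp only [Sum.elim_inl, Sum.elim_inr, List.get_eq_getElem]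
        exact h1.symm),
      by
        refine repV_ind R NT child hchild ?_
        rintro (v | ⟨p, v⟩)
        · exact (q.1.1).2 v
        · exact ((q.1.2 p)).2 v⟩,
      by
        refine Eq.trans ?_ q.2.2
        exact List.map_pmap _⟩
  invFun ξ' :=
    ⟨(⟨fun v => ξ'.1.1 (Quot.mk (repRel R NT child) (Sum.inl v)),
        fun v => ξ'.1.2 (Quot.mk (repRel R NT child) (Sum.inl v))⟩,
      fun p => ⟨fun v => ξ'.1.1 (Quot.mk (repRel R NT child) (Sum.inr ⟨p, v⟩)),
        fun v => ξ'.1.2 (Quot.mk (repRel R NT child) (Sum.inr ⟨p, v⟩))⟩),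
      ⟨by
        intro p
        have hlen1 : ((child p.1 p.2.1 p.2.2).ext.map
            (fun v => ξ'.1.1 (Quot.mk (repRel R NT child) (Sum.inr ⟨p, v⟩)))).length
            = (htype (R.labE p.1)).length := by
          simp [len_ext R NT child hchild p]
        have hlen2 : (R.attVals (fun v => ξ'.1.1 (Quot.mk (repRel R NT child) (Sum.inl v)))
            p.1 p.2.1).length = (htype (R.labE p.1)).length := by
          simp [Fragment.attVals, len_att R NT p]
        apply List.ext_getElem (by rw [hlen1, hlen2])
        intro i h1 h2
        rw [List.getElem_map]
        unfold Fragment.attVals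
        simp only [List.getElem_pmap]
        have hi : i < (R.att p.1).length := by
          simpa [Fragment.attVals] using h2
        have hj : i < (child p.1 p.2.1 p.2.2).ext.length := by simpa using h1
        have hrel : Quot.mk (repRel R NT child)
            (Sum.inl ⟨(R.att p.1).get ⟨i, hi⟩, R.att_mem p.1 p.2.1 _ (List.get_mem _ _)⟩)
            = Quot.mk (repRel R NT child)
              (Sum.inr ⟨p, (child p.1 p.2.1 p.2.2).ext.get ⟨i, hj⟩⟩) :=
          Quot.sound ⟨p, i, hi, _, hj, rfl, rfl⟩
        simp only [List.get_eq_getElem] at hrel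
        exact (congrArg ξ'.1.1 hrel).symm.trans (List.getElem_pmap (fun v h => ξ'.1.1 (Quot.mk (repRel R NT child) (Sum.inl ⟨v, h⟩)))
            (R.att_mem p.1 p.2.1) (by simpa using hi)).symm,
      by
        refine Eq.trans ?_ ξ'.2
        unfold Fragment.extVals
        exact (List.map_pmap (g := ξ'.1.1)
          (f := fun v h => Quot.mk (repRel R NT child) (Sum.inl ⟨v, h⟩))
          (l := R.ext) (H := R.ext_mem)).symm⟩⟩
  left_inv q := Subtype.ext (Prod.ext (Subtype.ext rfl) (funext fun p => Subtype.ext rfl))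
  right_inv ξ' := by
    apply Subtype.ext
    apply Subtype.ext
    funext x
    revert x
    refine repV_ind R NT child hchild ?_
    rintro (v | ⟨p, v⟩) <;> rfl

end ReplaceEquiv
section WeightReplace

variable {LV LE W : Type} {htype : LE → List LV}
variable (R : Fragment LV LE htype) (NT : Set LE)
  (child : ∀ e, e ∈ R.E → R.labE e ∈ NT → AHyper LV LE htype)
  (hchild : ∀ e he hn, ((child e he hn).ext).map (child e he hn).labV = htype (R.labE e))

theorem weight_replace (Tset : Set LE) (F : LE → List W → NNReal)
    (hdisj : ∀ e ∈ R.E, R.labE e ∈ Tset → R.labE e ∉ NT)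
    (g : (R.replace NT child hchild).V → W) :
    (R.replace NT child hchild).weight Tset F g =
      (∏ᶠ e : {e : ℕ // e ∈ R.E ∧ R.labE e ∈ Tset},
        (F (R.labE e.1)
          (R.attVals (fun v => g (Quot.mk (repRel R NT child) (Sum.inl v))) e.1 e.2.1) : ℝ≥0∞)) *
      ∏ᶠ p : {e : ℕ // e ∈ R.E ∧ R.labE e ∈ NT},
        (child p.1 p.2.1 p.2.2).weight Tset F
          (fun v => g (Quot.mk (repRel R NT child) (Sum.inr ⟨p, v⟩))) := by
  haveI hA : Finite {e : ℕ // e ∈ R.E ∧ R.labE e ∉ NT} :=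
    (R.E.finite_toSet.subset (fun e he => he.1)).to_subtype
  haveI hN : Finite {e : ℕ // e ∈ R.E ∧ R.labE e ∈ NT} :=
    (R.E.finite_toSet.subset (fun e he => he.1)).to_subtype
  haveI hT : Finite {e : ℕ // e ∈ R.E ∧ R.labE e ∈ Tset} :=
    (R.E.finite_toSet.subset (fun e he => he.1)).to_subtype
  haveI hC : ∀ p : {e : ℕ // e ∈ R.E ∧ R.labE e ∈ NT}, Finite (child p.1 p.2.1 p.2.2).E :=
    fun p => (child p.1 p.2.1 p.2.2).finE
  unfold AHyper.weight
  -- reindex the finprod over the subtype of the sum type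
  let e0 : {e : ({e : ℕ // e ∈ R.E ∧ R.labE e ∉ NT} ⊕
        Σ p : {e : ℕ // e ∈ R.E ∧ R.labE e ∈ NT}, (child p.1 p.2.1 p.2.2).E) //
        (R.replace NT child hchild).labE e ∈ Tset} ≃
      {a : {e : ℕ // e ∈ R.E ∧ R.labE e ∉ NT} // R.labE a.1 ∈ Tset} ⊕
      {b : (Σ p : {e : ℕ // e ∈ R.E ∧ R.labE e ∈ NT}, (child p.1 p.2.1 p.2.2).E) //
        (child b.1.1 b.1.2.1 b.1.2.2).labE b.2 ∈ Tset} :=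
    Equiv.subtypeSum
  haveI : Finite (R.replace NT child hchild).E := (R.replace NT child hchild).finE
  refine Eq.trans (Eq.trans (finprod_equiv_comp e0.symm
    (fun e => (F ((R.replace NT child hchild).labE e.1)
      (((R.replace NT child hchild).att e.1).map g) : ℝ≥0∞))).symm (finprod_sum_split _)) ?_
  congr 1
  · let eA : {e : ℕ // e ∈ R.E ∧ R.labE e ∈ Tset} ≃
        {a : {e : ℕ // e ∈ R.E ∧ R.labE e ∉ NT} // R.labE a.1 ∈ Tset} :=
      { toFun := fun e => ⟨⟨e.1, e.2.1, hdisj e.1 e.2.1 e.2.2⟩, e.2.2⟩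
        invFun := fun a => ⟨a.1.1, a.1.2.1, a.2⟩
        left_inv := fun e => rfl
        right_inv := fun a => rfl }
    refine Eq.trans (finprod_equiv_comp eA _).symm (finprod_congr fun e => ?_)
    show (F (R.labE e.1)
      (((R.att e.1).pmap (fun v h => Quot.mk (repRel R NT child) (Sum.inl ⟨v, h⟩)) _).map g)
        : ℝ≥0∞) = _
    exact congrArg (fun x => (F _ x : ℝ≥0∞)) (List.map_pmap _)
  · refine Eq.trans (Eq.trans (finprod_equiv_comp (sigmaSubtypeEquiv'
      (fun (p : {e : ℕ // e ∈ R.E ∧ R.labE e ∈ NT}) (eb : (child p.1 p.2.1 p.2.2).E) =>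
        (child p.1 p.2.1 p.2.2).labE eb ∈ Tset)).symm _).symm (finprod_sigma_split _)) ?_
    refine finprod_congr fun p => ?_
    refine finprod_congr fun eb => ?_
    show (F ((child p.1 p.2.1 p.2.2).labE eb.1)
      ((((child p.1 p.2.1 p.2.2).att eb.1).map
        (fun v => Quot.mk (repRel R NT child) (Sum.inr ⟨p, v⟩))).map g) : ℝ≥0∞) = _
    exact congrArg (fun x => (F _ x : ℝ≥0∞)) List.map_map

end WeightReplace
section ReplaceTsum

variable {LV LE W : Type} {htype : LE → List LV}
variable (R : Fragment LV LE htype) (NT : Set LE)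
  (child : ∀ e, e ∈ R.E → R.labE e ∈ NT → AHyper LV LE htype)
  (hchild : ∀ e he hn, ((child e he hn).ext).map (child e he hn).labV = htype (R.labE e))

theorem replace_tsum (Ω : LV → Set W) (Tset : Set LE) (F : LE → List W → NNReal)
    (hdisj : ∀ e ∈ R.E, R.labE e ∈ Tset → R.labE e ∉ NT) (ξv : List W) :
    (∑' ξ' : {ξ' : (R.replace NT child hchild).Assign Ω //
        ((R.replace NT child hchild).ext).map ξ'.1 = ξv},
      (R.replace NT child hchild).weight Tset F ξ'.1.1)
    = ∑' ξR : {ξR : R.Assign Ω // R.extVals ξR.1 = ξv},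
        (∏ᶠ e : {e : ℕ // e ∈ R.E ∧ R.labE e ∈ Tset},
           (F (R.labE e.1) (R.attVals ξR.1.1 e.1 e.2.1) : ℝ≥0∞)) *
        ∏ᶠ p : {e : ℕ // e ∈ R.E ∧ R.labE e ∈ NT},
           ∑' ξc : {ξc : AHyper.Assign Ω (child p.1 p.2.1 p.2.2) //
               ((child p.1 p.2.1 p.2.2).ext).map ξc.1 = R.attVals ξR.1.1 p.1 p.2.1},
             (child p.1 p.2.1 p.2.2).weight Tset F ξc.1.1 := by
  haveI hN : Finite {e : ℕ // e ∈ R.E ∧ R.labE e ∈ NT} :=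
    (R.E.finite_toSet.subset (fun e he => he.1)).to_subtype
  let PairType := {q : (R.Assign Ω) × (∀ p : {e : ℕ // e ∈ R.E ∧ R.labE e ∈ NT},
          AHyper.Assign Ω (child p.1 p.2.1 p.2.2)) //
      (∀ p : {e : ℕ // e ∈ R.E ∧ R.labE e ∈ NT},
          ((child p.1 p.2.1 p.2.2).ext).map ((q.2 p).1) = R.attVals (q.1).1 p.1 p.2.1)
        ∧ R.extVals (q.1).1 = ξv}
  let e2 : PairType ≃
      Σ ξR : {ξR : R.Assign Ω // R.extVals ξR.1 = ξv},
        (∀ p : {e : ℕ // e ∈ R.E ∧ R.labE e ∈ NT},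
          {ξc : AHyper.Assign Ω (child p.1 p.2.1 p.2.2) //
            ((child p.1 p.2.1 p.2.2).ext).map ξc.1 = R.attVals ξR.1.1 p.1 p.2.1}) :=
    { toFun := fun q => ⟨⟨q.1.1, q.2.2⟩, fun p => ⟨q.1.2 p, q.2.1 p⟩⟩
      invFun := fun x => ⟨(x.1.1, fun p => (x.2 p).1), ⟨fun p => (x.2 p).2, x.1.2⟩⟩
      left_inv := fun q => rfl
      right_inv := fun x => rfl }
  calc (∑' ξ' : {ξ' : (R.replace NT child hchild).Assign Ω //
        ((R.replace NT child hchild).ext).map ξ'.1 = ξv},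
      (R.replace NT child hchild).weight Tset F ξ'.1.1)
      = ∑' q : PairType, (R.replace NT child hchild).weight Tset F
          ((assignEquiv R NT child hchild Ω ξv q).1.1) :=
        ((assignEquiv R NT child hchild Ω ξv).tsum_eq _).symm
    _ = ∑' q : PairType,
          (∏ᶠ e : {e : ℕ // e ∈ R.E ∧ R.labE e ∈ Tset},
            (F (R.labE e.1) (R.attVals (q.1.1).1 e.1 e.2.1) : ℝ≥0∞)) *
          ∏ᶠ p : {e : ℕ // e ∈ R.E ∧ R.labE e ∈ NT},
            (child p.1 p.2.1 p.2.2).weight Tset F ((q.1.2 p).1) := by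
        refine tsum_congr fun q => ?_
        refine Eq.trans (weight_replace R NT child hchild Tset F hdisj _) ?_
        rfl
    _ = ∑' x : Σ ξR : {ξR : R.Assign Ω // R.extVals ξR.1 = ξv},
        (∀ p : {e : ℕ // e ∈ R.E ∧ R.labE e ∈ NT},
          {ξc : AHyper.Assign Ω (child p.1 p.2.1 p.2.2) //
            ((child p.1 p.2.1 p.2.2).ext).map ξc.1 = R.attVals ξR.1.1 p.1 p.2.1}),
          (∏ᶠ e : {e : ℕ // e ∈ R.E ∧ R.labE e ∈ Tset},
            (F (R.labE e.1) (R.attVals (x.1.1).1 e.1 e.2.1) : ℝ≥0∞)) *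
          ∏ᶠ p : {e : ℕ // e ∈ R.E ∧ R.labE e ∈ NT},
            (child p.1 p.2.1 p.2.2).weight Tset F (((x.2 p).1).1) :=
        (e2.symm.tsum_eq _).symm
    _ = ∑' ξR : {ξR : R.Assign Ω // R.extVals ξR.1 = ξv},
        ∑' fam : (∀ p : {e : ℕ // e ∈ R.E ∧ R.labE e ∈ NT},
          {ξc : AHyper.Assign Ω (child p.1 p.2.1 p.2.2) //
            ((child p.1 p.2.1 p.2.2).ext).map ξc.1 = R.attVals ξR.1.1 p.1 p.2.1}),
          (∏ᶠ e : {e : ℕ // e ∈ R.E ∧ R.labE e ∈ Tset},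
            (F (R.labE e.1) (R.attVals (ξR.1).1 e.1 e.2.1) : ℝ≥0∞)) *
          ∏ᶠ p : {e : ℕ // e ∈ R.E ∧ R.labE e ∈ NT},
            (child p.1 p.2.1 p.2.2).weight Tset F (((fam p).1).1) :=
        ENNReal.tsum_sigma' _
    _ = ∑' ξR : {ξR : R.Assign Ω // R.extVals ξR.1 = ξv},
          (∏ᶠ e : {e : ℕ // e ∈ R.E ∧ R.labE e ∈ Tset},
            (F (R.labE e.1) (R.attVals (ξR.1).1 e.1 e.2.1) : ℝ≥0∞)) *
          ∑' fam : (∀ p : {e : ℕ // e ∈ R.E ∧ R.labE e ∈ NT},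
            {ξc : AHyper.Assign Ω (child p.1 p.2.1 p.2.2) //
              ((child p.1 p.2.1 p.2.2).ext).map ξc.1 = R.attVals ξR.1.1 p.1 p.2.1}),
            ∏ᶠ p : {e : ℕ // e ∈ R.E ∧ R.labE e ∈ NT},
              (child p.1 p.2.1 p.2.2).weight Tset F (((fam p).1).1) :=
        tsum_congr fun ξR => ENNReal.tsum_mul_left
    _ = _ := tsum_congr fun ξR => by
        congr 1
        exact tsum_pi_enn (fun (p : {e : ℕ // e ∈ R.E ∧ R.labE e ∈ NT}) (ξc : {ξc : AHyper.Assign Ω (child p.1 p.2.1 p.2.2) //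
              ((child p.1 p.2.1 p.2.2).ext).map ξc.1 = R.attVals ξR.1.1 p.1 p.2.1}) =>
          (child p.1 p.2.1 p.2.2).weight Tset F (ξc.1.1))

end ReplaceTsum
section FGGLevel

variable {LV LE W : Type} {htype : LE → List LV}

/-- The contribution of a single derivation tree at given external values. -/
noncomputable def contrib (G : FGG LV LE htype W) {X : LE} (D : Deriv G.toHRG X)
    (ξv : List W) : ℝ≥0∞ :=
  ∑' ξ' : {ξ' : (G.toHRG.derive D).Assign G.Ω //
      ((G.toHRG.derive D).ext).map ξ'.1 = ξv},
    (G.toHRG.derive D).weight G.T G.F ξ'.1.1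

theorem derive_node (G : FGG LV LE htype W) (π : G.P)
    (c : ∀ e, e ∈ (G.rhs π).E → (G.rhs π).labE e ∈ G.N → Deriv G.toHRG ((G.rhs π).labE e)) :
    G.toHRG.derive (Deriv.node π c) = Fragment.replace (G.rhs π) G.N
      (fun e he hn => G.toHRG.derive (c e he hn))
      (fun e he hn => (G.toHRG.deriveA (c e he hn)).2) := rfl

theorem contrib_node (G : FGG LV LE htype W) (π : G.P)
    (c : ∀ e, e ∈ (G.rhs π).E → (G.rhs π).labE e ∈ G.N → Deriv G.toHRG ((G.rhs π).labE e))
    (ξv : List W) :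
    contrib G (Deriv.node π c) ξv
    = ∑' ξR : {ξR : (G.rhs π).Assign G.Ω // (G.rhs π).extVals ξR.1 = ξv},
        (∏ᶠ e : {e : ℕ // e ∈ (G.rhs π).E ∧ (G.rhs π).labE e ∈ G.T},
          (G.F ((G.rhs π).labE e.1) ((G.rhs π).attVals ξR.1.1 e.1 e.2.1) : ℝ≥0∞)) *
        ∏ᶠ p : {e : ℕ // e ∈ (G.rhs π).E ∧ (G.rhs π).labE e ∈ G.N},
          contrib G (c p.1 p.2.1 p.2.2) ((G.rhs π).attVals ξR.1.1 p.1 p.2.1) :=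
  replace_tsum (G.rhs π) G.N
    (fun e he hn => G.toHRG.derive (c e he hn))
    (fun e he hn => (G.toHRG.deriveA (c e he hn)).2)
    G.Ω G.T G.F
    (fun e _ hT => Set.disjoint_right.mp G.disj hT) ξv

end FGGLevel
section PsiP

variable {LV LE W : Type} {htype : LE → List LV}

/-- Sum of contributions over derivation trees satisfying a predicate. -/
noncomputable def psiP (G : FGG LV LE htype W)
    (Φ : ∀ X : LE, Deriv G.toHRG X → Prop) : LE → List W → ℝ≥0∞ :=
  fun X ξv => ∑' D : {D : Deriv G.toHRG X // Φ X D}, contrib G D.1 ξv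

theorem contrib_cast (G : FGG LV LE htype W) {X Y : LE} (h : X = Y)
    {Φ : ∀ X : LE, Deriv G.toHRG X → Prop}
    (s : {D : Deriv G.toHRG X // Φ X D}) (ξv : List W) :
    contrib G ((h ▸ s : {D : Deriv G.toHRG Y // Φ Y D})).1 ξv = contrib G s.1 ξv := by
  subst h; rfl

/-- Derivation trees with given root type satisfying `Φ` are in bijection with a
rule together with children trees satisfying `Φ'`. -/
noncomputable def derivPredEquiv (G : FGG LV LE htype W)
    (Φ Φ' : ∀ X : LE, Deriv G.toHRG X → Prop)
    (hΦ : ∀ (π : G.P) c, Φ (G.lhs π) (Deriv.node π c) ↔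
      ∀ e he hn, Φ' ((G.rhs π).labE e) (c e he hn)) (X : LE) :
    (Σ π : {π : G.P // G.lhs π = X},
      ∀ p : {e : ℕ // e ∈ (G.rhs π.1).E ∧ (G.rhs π.1).labE e ∈ G.N},
        {D : Deriv G.toHRG ((G.rhs π.1).labE p.1) // Φ' ((G.rhs π.1).labE p.1) D}) ≃
    {D : Deriv G.toHRG X // Φ X D} where
  toFun x := x.1.2 ▸ (⟨Deriv.node x.1.1 (fun e he hn => (x.2 ⟨e, he, hn⟩).1),
      (hΦ x.1.1 _).mpr (fun e he hn => (x.2 ⟨e, he, hn⟩).2)⟩ :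
      {D : Deriv G.toHRG (G.lhs x.1.1) // Φ (G.lhs x.1.1) D})
  invFun D := match X, D with
    | _, ⟨.node π c, hD⟩ =>
      ⟨⟨π, rfl⟩, fun p => ⟨c p.1 p.2.1 p.2.2, ((hΦ π c).mp hD) p.1 p.2.1 p.2.2⟩⟩
  left_inv := by
    rintro ⟨⟨π, hπ⟩, fam⟩
    subst hπ
    rfl
  right_inv := by
    rintro ⟨D, hD⟩
    cases D with
    | node π c => rfl

end PsiP
section PsiPStep

variable {LV LE W : Type} {htype : LE → List LV}

theorem psiP_step (G : FGG LV LE htype W)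
    (Φ Φ' : ∀ X : LE, Deriv G.toHRG X → Prop)
    (hΦ : ∀ (π : G.P) c, Φ (G.lhs π) (Deriv.node π c) ↔
      ∀ e he hn, Φ' ((G.rhs π).labE e) (c e he hn)) :
    psiP G Φ = G.sysOp (psiP G Φ') := by
  funext X ξv
  haveI : ∀ π : G.P, Finite {e : ℕ // e ∈ (G.rhs π).E ∧ (G.rhs π).labE e ∈ G.N} :=
    fun π => (((G.rhs π).E).finite_toSet.subset (fun e he => he.1)).to_subtype
  calc psiP G Φ X ξv
      = ∑' x : (Σ π : {π : G.P // G.lhs π = X},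
          ∀ p : {e : ℕ // e ∈ (G.rhs π.1).E ∧ (G.rhs π.1).labE e ∈ G.N},
            {D : Deriv G.toHRG ((G.rhs π.1).labE p.1) // Φ' ((G.rhs π.1).labE p.1) D}),
          contrib G ((derivPredEquiv G Φ Φ' hΦ X) x).1 ξv :=
        ((derivPredEquiv G Φ Φ' hΦ X).tsum_eq _).symm
    _ = ∑' π : {π : G.P // G.lhs π = X},
        ∑' fam : (∀ p : {e : ℕ // e ∈ (G.rhs π.1).E ∧ (G.rhs π.1).labE e ∈ G.N},
            {D : Deriv G.toHRG ((G.rhs π.1).labE p.1) // Φ' ((G.rhs π.1).labE p.1) D}),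
          contrib G ((derivPredEquiv G Φ Φ' hΦ X) ⟨π, fam⟩).1 ξv :=
        ENNReal.tsum_sigma' _
    _ = ∑' π : {π : G.P // G.lhs π = X},
        ∑' fam : (∀ p : {e : ℕ // e ∈ (G.rhs π.1).E ∧ (G.rhs π.1).labE e ∈ G.N},
            {D : Deriv G.toHRG ((G.rhs π.1).labE p.1) // Φ' ((G.rhs π.1).labE p.1) D}),
          ∑' ξR : {ξR : (G.rhs π.1).Assign G.Ω // (G.rhs π.1).extVals ξR.1 = ξv},
            (∏ᶠ e : {e : ℕ // e ∈ (G.rhs π.1).E ∧ (G.rhs π.1).labE e ∈ G.T},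
              (G.F ((G.rhs π.1).labE e.1)
                ((G.rhs π.1).attVals ξR.1.1 e.1 e.2.1) : ℝ≥0∞)) *
            ∏ᶠ p : {e : ℕ // e ∈ (G.rhs π.1).E ∧ (G.rhs π.1).labE e ∈ G.N},
              contrib G ((fam p).1) ((G.rhs π.1).attVals ξR.1.1 p.1 p.2.1) := by
        refine tsum_congr fun π => tsum_congr fun fam => ?_
        refine Eq.trans (contrib_cast G π.2 _ ξv) ?_
        exact contrib_node G π.1 _ ξv
    _ = ∑' π : {π : G.P // G.lhs π = X},
          ∑' ξR : {ξR : (G.rhs π.1).Assign G.Ω // (G.rhs π.1).extVals ξR.1 = ξv},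
          ∑' fam : (∀ p : {e : ℕ // e ∈ (G.rhs π.1).E ∧ (G.rhs π.1).labE e ∈ G.N},
            {D : Deriv G.toHRG ((G.rhs π.1).labE p.1) // Φ' ((G.rhs π.1).labE p.1) D}),
            (∏ᶠ e : {e : ℕ // e ∈ (G.rhs π.1).E ∧ (G.rhs π.1).labE e ∈ G.T},
              (G.F ((G.rhs π.1).labE e.1)
                ((G.rhs π.1).attVals ξR.1.1 e.1 e.2.1) : ℝ≥0∞)) *
            ∏ᶠ p : {e : ℕ // e ∈ (G.rhs π.1).E ∧ (G.rhs π.1).labE e ∈ G.N},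
              contrib G ((fam p).1) ((G.rhs π.1).attVals ξR.1.1 p.1 p.2.1) :=
        tsum_congr fun π => ENNReal.tsum_comm
    _ = ∑' π : {π : G.P // G.lhs π = X},
          ∑' ξR : {ξR : (G.rhs π.1).Assign G.Ω // (G.rhs π.1).extVals ξR.1 = ξv},
            (∏ᶠ e : {e : ℕ // e ∈ (G.rhs π.1).E ∧ (G.rhs π.1).labE e ∈ G.T},
              (G.F ((G.rhs π.1).labE e.1)
                ((G.rhs π.1).attVals ξR.1.1 e.1 e.2.1) : ℝ≥0∞)) *
            ∑' fam : (∀ p : {e : ℕ // e ∈ (G.rhs π.1).E ∧ (G.rhs π.1).labE e ∈ G.N},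
              {D : Deriv G.toHRG ((G.rhs π.1).labE p.1) // Φ' ((G.rhs π.1).labE p.1) D}),
              ∏ᶠ p : {e : ℕ // e ∈ (G.rhs π.1).E ∧ (G.rhs π.1).labE e ∈ G.N},
                contrib G ((fam p).1) ((G.rhs π.1).attVals ξR.1.1 p.1 p.2.1) :=
        tsum_congr fun π => tsum_congr fun ξR => ENNReal.tsum_mul_left
    _ = ∑' π : {π : G.P // G.lhs π = X},
          ∑' ξR : {ξR : (G.rhs π.1).Assign G.Ω // (G.rhs π.1).extVals ξR.1 = ξv},
            (∏ᶠ e : {e : ℕ // e ∈ (G.rhs π.1).E ∧ (G.rhs π.1).labE e ∈ G.T},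
              (G.F ((G.rhs π.1).labE e.1)
                ((G.rhs π.1).attVals ξR.1.1 e.1 e.2.1) : ℝ≥0∞)) *
            ∏ᶠ p : {e : ℕ // e ∈ (G.rhs π.1).E ∧ (G.rhs π.1).labE e ∈ G.N},
              ∑' Dc : {D : Deriv G.toHRG ((G.rhs π.1).labE p.1) //
                  Φ' ((G.rhs π.1).labE p.1) D},
                contrib G Dc.1 ((G.rhs π.1).attVals ξR.1.1 p.1 p.2.1) := by
        refine tsum_congr fun π => tsum_congr fun ξR => ?_
        congr 1
        exact tsum_pi_enn
          (fun (p : {e : ℕ // e ∈ (G.rhs π.1).E ∧ (G.rhs π.1).labE e ∈ G.N})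
            (Dc : {D : Deriv G.toHRG ((G.rhs π.1).labE p.1) //
              Φ' ((G.rhs π.1).labE p.1) D}) =>
            contrib G Dc.1 ((G.rhs π.1).attVals ξR.1.1 p.1 p.2.1))
    _ = G.sysOp (psiP G Φ') X ξv := rfl

end PsiPStep
section Below

variable {LV LE W : Type} {htype : LE → List LV}

/-- Derivation trees of depth less than `n`. -/
def below (G : HRG LV LE htype) : ℕ → ∀ {X : LE}, Deriv G X → Prop
  | 0 => fun _ => False
  | n+1 => fun D => match D with
      | .node _ c => ∀ e he hn, below G n (c e he hn)

theorem below_mono (G : HRG LV LE htype) :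
    ∀ (n m : ℕ), n ≤ m → ∀ {X : LE} (D : Deriv G X), below G n D → below G m D := by
  intro n
  induction n with
  | zero => intro m _ X D h; exact h.elim
  | succ n ih =>
    intro m hm X D h
    obtain ⟨m', rfl⟩ : ∃ m', m = m' + 1 := ⟨m - 1, by omega⟩
    cases D with
    | node π c => exact fun e he hn => ih m' (by omega) _ (h e he hn)

theorem exists_below (G : HRG LV LE htype) {X : LE} (D : Deriv G X) :
    ∃ n, below G n D := by
  induction D with
  | node π c ih =>
    haveI : Finite {e : ℕ // e ∈ (G.rhs π).E ∧ (G.rhs π).labE e ∈ G.N} :=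
      (((G.rhs π).E).finite_toSet.subset (fun e he => he.1)).to_subtype
    haveI := Fintype.ofFinite {e : ℕ // e ∈ (G.rhs π).E ∧ (G.rhs π).labE e ∈ G.N}
    refine ⟨(Finset.univ.sup
      (fun p : {e : ℕ // e ∈ (G.rhs π).E ∧ (G.rhs π).labE e ∈ G.N} =>
        (ih p.1 p.2.1 p.2.2).choose)) + 1, ?_⟩
    intro e he hn
    exact below_mono G _ _
      (Finset.le_sup (f := fun p : {e : ℕ // e ∈ (G.rhs π).E ∧ (G.rhs π).labE e ∈ G.N} =>
        (ih p.1 p.2.1 p.2.2).choose) (Finset.mem_univ ⟨e, he, hn⟩))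
      _ (ih e he hn).choose_spec

/-- ψ* : the total sum of contributions. -/
noncomputable def psiStar (G : FGG LV LE htype W) : LE → List W → ℝ≥0∞ :=
  fun X ξv => ∑' D : Deriv G.toHRG X, contrib G D ξv

theorem psiStar_eq_psiP (G : FGG LV LE htype W) :
    psiStar G = psiP G (fun _ _ => True) := by
  funext X ξv
  exact ((Equiv.subtypeUnivEquiv (fun _ => trivial)).tsum_eq
    (fun D => contrib G D ξv)).symm

theorem psiStar_eq_iSup (G : FGG LV LE htype W) (X : LE) (ξv : List W) :
    psiStar G X ξv = ⨆ n, psiP G (fun _ D => below G.toHRG n D) X ξv := by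
  apply le_antisymm
  · rw [psiStar, ENNReal.tsum_eq_iSup_sum]
    refine iSup_le fun s => ?_
    set n := s.sup (fun D => (exists_below G.toHRG D).choose) with hn
    have hbel : ∀ D ∈ s, below G.toHRG n D := fun D hD =>
      below_mono G.toHRG _ _ (Finset.le_sup hD) D (exists_below G.toHRG D).choose_spec
    refine le_trans ?_ (le_iSup _ n)
    rw [psiP]
    have hemb : Function.Injective
        (fun d : {D : Deriv G.toHRG X // D ∈ s} =>
          (⟨d.1, hbel d.1 d.2⟩ : {D : Deriv G.toHRG X // below G.toHRG n D})) :=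
      fun a b hab => Subtype.ext (congrArg Subtype.val hab :)
    calc ∑ D ∈ s, contrib G D ξv
        = ∑ d ∈ s.attach, contrib G d.1 ξv := (Finset.sum_attach _ _).symm
      _ = ∑ x ∈ s.attach.map ⟨_, hemb⟩, contrib G x.1 ξv := by
          rw [Finset.sum_map]
          rfl
      _ ≤ ∑' x : {D : Deriv G.toHRG X // below G.toHRG n D}, contrib G x.1 ξv :=
          ENNReal.sum_le_tsum _
  · refine iSup_le fun n => ?_
    exact ENNReal.tsum_comp_le_tsum_of_injective Subtype.val_injective
      (fun D => contrib G D ξv)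

theorem sysOp_mono (G : FGG LV LE htype W) : Monotone G.sysOp := by
  intro ψ ψ' h X ξv
  haveI : ∀ π : G.P, Finite {e : ℕ // e ∈ (G.rhs π).E ∧ (G.rhs π).labE e ∈ G.N} :=
    fun π => (((G.rhs π).E).finite_toSet.subset (fun e he => he.1)).to_subtype
  refine ENNReal.tsum_le_tsum fun π => ENNReal.tsum_le_tsum fun ξ' => ?_
  refine mul_le_mul' le_rfl ?_
  exact finprod_le_finprod_enn _ _ fun p => h _ _

end Below
theorem statement0' {LV LE W : Type} {htype : LE → List LV}
    (G : FGG LV LE htype W) (hfin : ∀ ℓ : LV, (G.Ω ℓ).Finite) :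
    ∃ hmono : Monotone G.sysOp,
      OrderHom.lfp ⟨G.sysOp, hmono⟩ G.S ([] : List W) = G.Z := by
  refine ⟨sysOp_mono G, ?_⟩
  have hfix : G.sysOp (psiStar G) = psiStar G := by
    rw [psiStar_eq_psiP]
    exact (psiP_step G (fun _ _ => True) (fun _ _ => True)
      (fun π c => iff_of_true trivial (fun _ _ _ => trivial))).symm
  have h1 : OrderHom.lfp ⟨G.sysOp, sysOp_mono G⟩ ≤ psiStar G :=
    OrderHom.lfp_le_fixed _ hfix
  have h2 : ∀ n, psiP G (fun _ D => below G.toHRG n D) ≤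
      OrderHom.lfp ⟨G.sysOp, sysOp_mono G⟩ := by
    intro n
    induction n with
    | zero =>
      intro X ξv
      haveI : IsEmpty {D : Deriv G.toHRG X // below G.toHRG 0 D} := ⟨fun d => d.2⟩
      rw [psiP, tsum_empty]
      exact zero_le
    | succ n ih =>
      have hstep : psiP G (fun _ D => below G.toHRG (n+1) D) =
          G.sysOp (psiP G (fun _ D => below G.toHRG n D)) :=
        psiP_step G _ _ (fun π c => Iff.rfl)
      rw [hstep]
      calc G.sysOp (psiP G (fun _ D => below G.toHRG n D))
          ≤ G.sysOp (OrderHom.lfp ⟨G.sysOp, sysOp_mono G⟩) := sysOp_mono G ih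
        _ = OrderHom.lfp ⟨G.sysOp, sysOp_mono G⟩ := OrderHom.map_lfp (f := ⟨G.sysOp, sysOp_mono G⟩)
  have h3 : psiStar G ≤ OrderHom.lfp ⟨G.sysOp, sysOp_mono G⟩ := by
    intro X ξv
    rw [psiStar_eq_iSup]
    exact iSup_le fun n => h2 n X ξv
  have hZ : G.Z = psiStar G G.S [] := by
    rw [FGG.Z, psiStar]
    refine tsum_congr fun D => ?_
    have hext : (G.toHRG.derive D).ext = [] := by
      have h4 := ((G.toHRG.deriveA D).2).trans G.S_type
      exact List.map_eq_nil_iff.mp h4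
    exact ((Equiv.subtypeUnivEquiv (fun ξ => by rw [hext]; rfl)).tsum_eq
      (fun ξ : (G.toHRG.derive D).Assign G.Ω =>
        (G.toHRG.derive D).weight G.T G.F ξ.1)).symm
  rw [hZ]
  exact le_antisymm (h1 G.S []) (h3 G.S [])

/-- For an FGG with finite variable domains, the defining
equations of the `ψ` system form a monotone operator on `[0,∞]`-valued
families, and the sum–product of the FGG equals the value of the least fixed
point at the start symbol (at the empty assignment, since `type S = ε`). -/
theorem statement0 {LV LE W : Type} {htype : LE → List LV}
    (G : FGG LV LE htype W) (hfin : ∀ ℓ : LV, (G.Ω ℓ).Finite) :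
    ∃ hmono : Monotone G.sysOp,
      OrderHom.lfp ⟨G.sysOp, hmono⟩ G.S ([] : List W) = G.Z :=
  statement0' G hfin
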